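/- Let (M, d₁, d₂) be a set with two pseudometrics and consider a map F = (F₁, F₂) on a product of complete metric spaces of functions such that the 2-vector of distances contracts: d(F(x), F(y)) ≤ Π · d(x,y) componentwise, where Π is a 2×2 matrix with nonnegative entries and r_σ(Π) < 1. Then F has a unique fixed point. (Generalized Banach fixed point theorem with matrix-valued contraction constant.) -/

import Mathlib

/-!
Set `a, b, c, d` for the entries of `P`. The Perron root
`r = (a + d + √((a - d)² + 4bc)) / 2` is a real root of the characteristic polynomial, so
`r ≤ specRad P < 1`. For any `q ∈ (r, 1)` there is a positive vector `v` with `P v ≤ q v`, and then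
`F` is a `q`-contraction for the weighted distance `max (d₁ / v₁) (d₂ / v₂)`. This distance is
equivalent to the product distance, so some iterate of `F` is a contraction in the usual sense
and the Banach fixed point theorem applies.
-/

noncomputable def specRad (A : Matrix (Fin 2) (Fin 2) ℝ) : ℝ :=
  (((A.map (Complex.ofReal)).charpoly.roots).map (fun z : ℂ => ‖z‖)).foldr max 0

open Polynomial Filter Topology

theorem Multiset.le_foldr_max {α : Type*} [LinearOrder α] {s : Multiset α} {x : α}
    (hx : x ∈ s) (b : α) :
    x ≤ s.foldr max b := by
  induction s using Quotient.inductionOn with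
  | h l => exact List.le_max_of_le' b hx le_rfl

theorem norm_le_specRad_of_isRoot {A : Matrix (Fin 2) (Fin 2) ℝ} {μ : ℂ}
    (hμ : (A.map Complex.ofReal).charpoly.IsRoot μ) : ‖μ‖ ≤ specRad A :=
  Multiset.le_foldr_max (Multiset.mem_map_of_mem _
    ((mem_roots (Matrix.charpoly_monic _).ne_zero).2 hμ)) 0

theorem charpoly_map_ofReal_eval_ofReal (A : Matrix (Fin 2) (Fin 2) ℝ) (t : ℝ) :
    (A.map Complex.ofReal).charpoly.eval (t : ℂ) =
      ((t - A 0 0) * (t - A 1 1) - A 0 1 * A 1 0 : ℝ) := by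
  simp [Matrix.charpoly_fin_two, Matrix.trace_fin_two, Matrix.det_fin_two]
  ring

theorem exists_pos_weights_of_specRad_lt_one (P : Matrix (Fin 2) (Fin 2) ℝ)
    (hpos : ∀ i j, 0 ≤ P i j) (hsr : specRad P < 1) :
    ∃ q, 0 ≤ q ∧ q < 1 ∧ ∃ v₁ v₂ : ℝ, 0 < v₁ ∧ 0 < v₂ ∧
      P 0 0 * v₁ + P 0 1 * v₂ ≤ q * v₁ ∧ P 1 0 * v₁ + P 1 1 * v₂ ≤ q * v₂ := by
  set a := P 0 0; set b := P 0 1; set c := P 1 0; set d := P 1 1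
  have hbc : 0 ≤ b * c := mul_nonneg (hpos 0 1) (hpos 1 0)
  set s := √((a - d) ^ 2 + 4 * (b * c))
  have hs : s ^ 2 = (a - d) ^ 2 + 4 * (b * c) := Real.sq_sqrt (by positivity)
  have hs_ge : |a - d| ≤ s := Real.abs_le_sqrt (by linarith)
  -- the Perron root: the larger root of `(t - a) * (t - d) - b * c`
  set r := (a + d + s) / 2 with hr
  have hra : a ≤ r := by linarith [le_abs_self (a - d)]
  have hrd : d ≤ r := by linarith [neg_abs_le (a - d)]
  have hroot : (r - a) * (r - d) = b * c := by linear_combination hs / 4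
  have hr1 : r < 1 := by
    refine lt_of_le_of_lt ?_ hsr
    calc r ≤ ‖(r : ℂ)‖ := by simp [le_abs_self]
      _ ≤ specRad P := norm_le_specRad_of_isRoot ?_
    rw [IsRoot.def, charpoly_map_ofReal_eval_ofReal]
    exact_mod_cast sub_eq_zero.2 hroot
  set q := (r + 1) / 2 with hq
  have hbc_le : b * c ≤ (q - a) * (q - d) :=
    hroot ▸ mul_le_mul (by linarith) (by linarith) (by linarith) (by linarith)
  -- `v` is the mediant of the two constraints `c / (q - d) ≤ v₂ / v₁ ≤ (q - a) / b`.
  refine ⟨q, by linarith [hpos 0 0], by linarith, b + (q - d), c + (q - a),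
    by linarith [hpos 0 1], by linarith [hpos 1 0], ?_, ?_⟩ <;> linear_combination hbc_le

theorem exists_unique_fixedPt_of_contractingWith_iterate {α : Type*} [MetricSpace α]
    [Nonempty α] [CompleteSpace α] {f : α → α} {K : NNReal} {n : ℕ}
    (hf : ContractingWith K f^[n]) : ∃! x, f x = x :=
  ⟨hf.fixedPoint f^[n], hf.isFixedPt_fixedPoint_iterate,
    fun _ hx => hf.fixedPoint_unique (Function.IsFixedPt.iterate hx n)⟩

theorem exists_unique_fixedPt_of_contracting_equivalent {α : Type*} [MetricSpace α]
    [Nonempty α] [CompleteSpace α] {f : α → α} (D : α → α → ℝ) {c C q : ℝ}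
    (hC : 0 ≤ C) (hq0 : 0 ≤ q) (hq1 : q < 1) (hdist : ∀ x y, dist x y ≤ C * D x y)
    (hD : ∀ x y, D x y ≤ c * dist x y) (hf : ∀ x y, D (f x) (f y) ≤ q * D x y) :
    ∃! x, f x = x := by
  have hiter : ∀ n x y, D (f^[n] x) (f^[n] y) ≤ q ^ n * D x y := by
    intro n
    induction n with
    | zero => simp
    | succ n ih =>
      intro x y
      rw [Function.iterate_succ_apply', Function.iterate_succ_apply', pow_succ', mul_assoc]
      exact (hf _ _).trans (mul_le_mul_of_nonneg_left (ih x y) hq0)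
  have hlim : Tendsto (fun n : ℕ => C * q ^ n * c) atTop (𝓝 0) := by
    simpa using ((tendsto_pow_atTop_nhds_zero_of_lt_one hq0 hq1).const_mul C).mul_const c
  obtain ⟨n, hn⟩ := (hlim.eventually (gt_mem_nhds one_pos)).exists
  refine exists_unique_fixedPt_of_contractingWith_iterate (n := n)
    ⟨Real.toNNReal_lt_one.2 hn, LipschitzWith.of_dist_le' fun x y => ?_⟩
  calc dist (f^[n] x) (f^[n] y) ≤ C * D (f^[n] x) (f^[n] y) := hdist _ _
    _ ≤ C * (q ^ n * (c * dist x y)) := by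
      gcongr
      exact (hiter n x y).trans (mul_le_mul_of_nonneg_left (hD x y) (pow_nonneg hq0 n))
    _ = C * q ^ n * c * dist x y := by ring

section WeightedMaxDist

variable {X₁ X₂ : Type*} [PseudoMetricSpace X₁] [PseudoMetricSpace X₂]

noncomputable def weightedMaxDist (v₁ v₂ : ℝ) (x y : X₁ × X₂) : ℝ :=
  max (dist x.1 y.1 / v₁) (dist x.2 y.2 / v₂)

variable {v₁ v₂ : ℝ} (x y : X₁ × X₂)

theorem weightedMaxDist_nonneg (hv₁ : 0 ≤ v₁) : 0 ≤ weightedMaxDist v₁ v₂ x y :=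
  le_max_of_le_left (div_nonneg dist_nonneg hv₁)

theorem dist_fst_le_mul_weightedMaxDist (hv₁ : 0 < v₁) :
    dist x.1 y.1 ≤ v₁ * weightedMaxDist v₁ v₂ x y := by
  rw [← div_le_iff₀' hv₁]
  exact le_max_left _ _

theorem dist_snd_le_mul_weightedMaxDist (hv₂ : 0 < v₂) :
    dist x.2 y.2 ≤ v₂ * weightedMaxDist v₁ v₂ x y := by
  rw [← div_le_iff₀' hv₂]
  exact le_max_right _ _

theorem dist_le_max_mul_weightedMaxDist (hv₁ : 0 < v₁) (hv₂ : 0 < v₂) :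
    dist x y ≤ max v₁ v₂ * weightedMaxDist v₁ v₂ x y := by
  have hD := weightedMaxDist_nonneg (v₂ := v₂) x y hv₁.le
  rw [Prod.dist_eq]
  exact max_le
    ((dist_fst_le_mul_weightedMaxDist x y hv₁).trans (by gcongr; exact le_max_left _ _))
    ((dist_snd_le_mul_weightedMaxDist x y hv₂).trans (by gcongr; exact le_max_right _ _))

theorem weightedMaxDist_le_inv_min_mul_dist (hv₁ : 0 < v₁) (hv₂ : 0 < v₂) :
    weightedMaxDist v₁ v₂ x y ≤ (min v₁ v₂)⁻¹ * dist x y := by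
  have hmin : 0 < min v₁ v₂ := lt_min hv₁ hv₂
  rw [inv_mul_eq_div, Prod.dist_eq]
  exact max_le
    (div_le_div₀ (le_max_of_le_left dist_nonneg) (le_max_left _ _) hmin (min_le_left _ _))
    (div_le_div₀ (le_max_of_le_left dist_nonneg) (le_max_right _ _) hmin (min_le_right _ _))

end WeightedMaxDist

theorem weightedMaxDist_map_le {X₁ X₂ : Type*} [PseudoMetricSpace X₁] [PseudoMetricSpace X₂]
    (F : X₁ × X₂ → X₁ × X₂) (P : Matrix (Fin 2) (Fin 2) ℝ) (hpos : ∀ i j, 0 ≤ P i j)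
    (hcontr : ∀ x y : X₁ × X₂,
      dist (F x).1 (F y).1 ≤ P 0 0 * dist x.1 y.1 + P 0 1 * dist x.2 y.2 ∧
      dist (F x).2 (F y).2 ≤ P 1 0 * dist x.1 y.1 + P 1 1 * dist x.2 y.2)
    {q v₁ v₂ : ℝ} (hv₁ : 0 < v₁) (hv₂ : 0 < v₂)
    (h₁ : P 0 0 * v₁ + P 0 1 * v₂ ≤ q * v₁) (h₂ : P 1 0 * v₁ + P 1 1 * v₂ ≤ q * v₂)
    (x y : X₁ × X₂) :
    weightedMaxDist v₁ v₂ (F x) (F y) ≤ q * weightedMaxDist v₁ v₂ x y := by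
  set D := weightedMaxDist v₁ v₂ x y
  have hD : 0 ≤ D := weightedMaxDist_nonneg x y hv₁.le
  have hd₁ := dist_fst_le_mul_weightedMaxDist (v₂ := v₂) x y hv₁
  have hd₂ := dist_snd_le_mul_weightedMaxDist (v₁ := v₁) x y hv₂
  obtain ⟨hF₁, hF₂⟩ := hcontr x y
  refine max_le ?_ ?_
  · rw [div_le_iff₀ hv₁]
    calc dist (F x).1 (F y).1 ≤ P 0 0 * (v₁ * D) + P 0 1 * (v₂ * D) :=
          hF₁.trans (by gcongr <;> apply hpos)
      _ = (P 0 0 * v₁ + P 0 1 * v₂) * D := by ring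
      _ ≤ q * v₁ * D := by gcongr
      _ = q * D * v₁ := by ring
  · rw [div_le_iff₀ hv₂]
    calc dist (F x).2 (F y).2 ≤ P 1 0 * (v₁ * D) + P 1 1 * (v₂ * D) :=
          hF₂.trans (by gcongr <;> apply hpos)
      _ = (P 1 0 * v₁ + P 1 1 * v₂) * D := by ring
      _ ≤ q * v₂ * D := by gcongr
      _ = q * D * v₂ := by ring

/-- generalized Banach fixed point theorem with a matrix-valued
contraction constant: if the 2-vector of distances contracts componentwise by a
nonnegative matrix with spectral radius < 1, then `F` has a unique fixed point. -/
theorem stmt17 {X₁ X₂ : Type*} [MetricSpace X₁] [CompleteSpace X₁] [Nonempty X₁]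
    [MetricSpace X₂] [CompleteSpace X₂] [Nonempty X₂]
    (F : X₁ × X₂ → X₁ × X₂) (P : Matrix (Fin 2) (Fin 2) ℝ)
    (hpos : ∀ i j, 0 ≤ P i j) (hsr : specRad P < 1)
    (hcontr : ∀ x y : X₁ × X₂,
      dist (F x).1 (F y).1 ≤ P 0 0 * dist x.1 y.1 + P 0 1 * dist x.2 y.2 ∧
      dist (F x).2 (F y).2 ≤ P 1 0 * dist x.1 y.1 + P 1 1 * dist x.2 y.2) :
    ∃! z : X₁ × X₂, F z = z := by
  obtain ⟨q, hq0, hq1, v₁, v₂, hv₁, hv₂, h₁, h₂⟩ :=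
    exists_pos_weights_of_specRad_lt_one P hpos hsr
  exact exists_unique_fixedPt_of_contracting_equivalent (weightedMaxDist v₁ v₂)
    (le_max_of_le_left hv₁.le) hq0 hq1
    (fun x y => dist_le_max_mul_weightedMaxDist x y hv₁ hv₂)
    (fun x y => weightedMaxDist_le_inv_min_mul_dist x y hv₁ hv₂)
    (weightedMaxDist_map_le F P hpos hcontr hv₁ hv₂ h₁ h₂)
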